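/- Let X be Uniform[0,1] and Y be Uniform[−1,1] independent, let P be the distribution of XY, and let D be the mixture (1/2)δ₀ + (1/2)P where δ₀ is the point mass at 0. Then D can be written as a mixture (ln 2 / 4)·U + (1 − ln 2/4)·Q, where U is the Uniform[−1/2, 1/2] distribution and Q is some probability distribution. -/

import Mathlib

open MeasureTheory

/-- The Uniform[0,1] distribution on ℝ. -/
noncomputable def unif01 : Measure ℝ := volume.restrict (Set.Icc (0 : ℝ) 1)

/-- The Uniform[-1,1] distribution on ℝ. -/
noncomputable def unifSym : Measure ℝ :=
  (2 : ENNReal)⁻¹ • volume.restrict (Set.Icc (-1 : ℝ) 1)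

/-- The Uniform[-1/2,1/2] distribution on ℝ. -/
noncomputable def unifHalf : Measure ℝ :=
  volume.restrict (Set.Icc (-(1 / 2) : ℝ) (1 / 2))

/-- The law of the product `XY` of independent `X ~ Uniform[0,1]` and
`Y ~ Uniform[-1,1]`. -/
noncomputable def prodLaw : Measure ℝ :=
  Measure.map (fun p : ℝ × ℝ => p.1 * p.2) (unif01.prod unifSym)

/-! For `|z| ≤ 1/2` and `x ∈ [1/2, 1]` the point `z / x` lies in `[-1, 1]`, so conditioning on
`X = x` the product `XY` has density `1 / (2x)` on `[-1/2, 1/2]`. Integrating over `x ∈ [1/2, 1]`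
shows that `P` dominates `(ln 2 / 2) · U`, hence `D ≥ (1/2) P` dominates `(ln 2 / 4) · U`; the
remainder `D - (ln 2 / 4) · U`, renormalized, is `Q`. -/

open Set

theorem exists_isProbabilityMeasure_eq_smul_add_smul {α : Type*} [MeasurableSpace α]
    {μ ν : Measure α} [IsProbabilityMeasure μ] [IsProbabilityMeasure ν] {c : ℝ}
    (hc₀ : 0 ≤ c) (hc₁ : c < 1) (h : ENNReal.ofReal c • ν ≤ μ) :
    ∃ Q : Measure α, IsProbabilityMeasure Q ∧
      μ = ENNReal.ofReal c • ν + ENNReal.ofReal (1 - c) • Q := by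
  set k := ENNReal.ofReal (1 - c)
  have hk₀ : k ≠ 0 := by simpa [k] using hc₁
  have hk : k ≠ ⊤ := ENNReal.ofReal_ne_top
  have : IsFiniteMeasure (ENNReal.ofReal c • ν) := ⟨by simp⟩
  refine ⟨k⁻¹ • (μ - ENNReal.ofReal c • ν), ⟨?_⟩, ?_⟩
  · rw [Measure.smul_apply, Measure.sub_apply MeasurableSet.univ h, Measure.smul_apply,
      measure_univ, measure_univ, smul_eq_mul, smul_eq_mul, mul_one, ← ENNReal.ofReal_one,
      ← ENNReal.ofReal_sub _ hc₀, ENNReal.ofReal_one, ENNReal.inv_mul_cancel hk₀ hk]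
  · rw [smul_smul, ENNReal.mul_inv_cancel hk₀ hk, one_smul, add_comm,
      Measure.sub_add_cancel_of_le h]

theorem lintegral_Icc_ofReal_inv {a b : ℝ} (ha : 0 < a) (hab : a ≤ b) :
    ∫⁻ x in Icc a b, ENNReal.ofReal x⁻¹ = ENNReal.ofReal (Real.log (b / a)) := by
  have hne : ∀ x ∈ uIcc a b, x ≠ 0 := fun x hx =>
    (ha.trans_le (by rw [uIcc_of_le hab] at hx; exact hx.1)).ne'
  rw [← integral_inv_of_pos ha (ha.trans_le hab), intervalIntegral.integral_of_le hab,
    ofReal_integral_eq_lintegral_ofReal, Measure.restrict_congr_set Ioc_ae_eq_Icc]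
  · exact (intervalIntegral.intervalIntegrable_inv hne continuousOn_id).1
  · filter_upwards [self_mem_ae_restrict measurableSet_Ioc] with x hx
    exact (inv_pos.2 (ha.trans hx.1)).le

theorem map_mul_prod_apply {M : Type*} [MeasurableSpace M] [Mul M] [MeasurableMul₂ M]
    (μ ν : Measure M) [SFinite ν] {s : Set M} (hs : MeasurableSet s) :
    (μ.prod ν).map (fun p : M × M => p.1 * p.2) s = ∫⁻ x, ν ((x * ·) ⁻¹' s) ∂μ := by
  rw [Measure.map_apply measurable_mul hs, Measure.prod_apply (measurable_mul hs)]
  rfl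

instance : IsProbabilityMeasure unif01 :=
  ⟨by simp [unif01]⟩

instance : IsProbabilityMeasure unifSym :=
  ⟨by norm_num [unifSym, ENNReal.inv_mul_cancel]⟩

instance : IsProbabilityMeasure unifHalf :=
  ⟨by norm_num [unifHalf]⟩

instance : IsProbabilityMeasure prodLaw :=
  Measure.isProbabilityMeasure_map measurable_mul.aemeasurable

theorem unifHalf_le_unifSym_preimage_mul {x : ℝ} (hx : 1 / 2 ≤ x) (s : Set ℝ) :
    2⁻¹ * ENNReal.ofReal x⁻¹ * unifHalf s ≤ unifSym ((x * ·) ⁻¹' s) := by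
  have hx₀ : 0 < x := by linarith
  have hsub : (x * ·) ⁻¹' (s ∩ Icc (-(1 / 2)) (1 / 2)) ⊆ (x * ·) ⁻¹' s ∩ Icc (-1) 1 :=
    fun y ⟨hy, hy₁, hy₂⟩ => ⟨hy, by constructor <;> nlinarith⟩
  calc 2⁻¹ * ENNReal.ofReal x⁻¹ * unifHalf s
      = 2⁻¹ * volume ((x * ·) ⁻¹' (s ∩ Icc (-(1 / 2)) (1 / 2))) := by
        rw [Real.volume_preimage_mul_left hx₀.ne', abs_of_pos (inv_pos.2 hx₀), unifHalf,
          Measure.restrict_apply' measurableSet_Icc, mul_assoc]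
    _ ≤ 2⁻¹ * volume ((x * ·) ⁻¹' s ∩ Icc (-1) 1) := by gcongr
    _ = unifSym ((x * ·) ⁻¹' s) := by
        rw [unifSym, Measure.smul_apply, Measure.restrict_apply' measurableSet_Icc, smul_eq_mul]

theorem smul_unifHalf_le_prodLaw : ENNReal.ofReal (Real.log 2 / 2) • unifHalf ≤ prodLaw := by
  refine Measure.le_iff.2 fun s hs => ?_
  calc (ENNReal.ofReal (Real.log 2 / 2) • unifHalf) s
      = ∫⁻ x in Icc (1 / 2) 1, 2⁻¹ * ENNReal.ofReal x⁻¹ * unifHalf s := by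
        rw [lintegral_mul_const _ (by fun_prop), lintegral_const_mul _ (by fun_prop),
          lintegral_Icc_ofReal_inv (by norm_num) (by norm_num), Measure.smul_apply, smul_eq_mul,
          ENNReal.ofReal_div_of_pos two_pos, ENNReal.ofReal_ofNat, div_eq_mul_inv, mul_comm 2⁻¹]
        norm_num
    _ ≤ ∫⁻ x in Icc (1 / 2) 1, unifSym ((x * ·) ⁻¹' s) :=
        setLIntegral_mono' measurableSet_Icc fun x hx => unifHalf_le_unifSym_preimage_mul hx.1 s
    _ ≤ ∫⁻ x, unifSym ((x * ·) ⁻¹' s) ∂unif01 :=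
        lintegral_mono' (Measure.restrict_mono (Icc_subset_Icc (by norm_num) le_rfl) le_rfl) le_rfl
    _ = prodLaw s := (map_mul_prod_apply _ _ hs).symm

/-- The mixture `D = (1/2)δ₀ + (1/2)P` is itself a mixture of the
Uniform[-1/2,1/2] distribution with weight `ln 2 / 4` and some probability
distribution `Q`. -/
theorem mixture_contains_uniform :
    ∃ Q : Measure ℝ, IsProbabilityMeasure Q ∧
      (2 : ENNReal)⁻¹ • Measure.dirac (0 : ℝ) + (2 : ENNReal)⁻¹ • prodLaw
        = ENNReal.ofReal (Real.log 2 / 4) • unifHalf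
            + ENNReal.ofReal (1 - Real.log 2 / 4) • Q := by
  have hlog₀ : 0 < Real.log 2 := Real.log_pos one_lt_two
  have hlog₁ : Real.log 2 < 4 := Real.log_two_lt_d9.trans (by norm_num)
  have : IsProbabilityMeasure
      ((2 : ENNReal)⁻¹ • Measure.dirac (0 : ℝ) + (2 : ENNReal)⁻¹ • prodLaw) :=
    ⟨by simp [ENNReal.inv_two_add_inv_two]⟩
  refine exists_isProbabilityMeasure_eq_smul_add_smul (by positivity) (by linarith) ?_
  calc ENNReal.ofReal (Real.log 2 / 4) • unifHalf
      = (2 : ENNReal)⁻¹ • ENNReal.ofReal (Real.log 2 / 2) • unifHalf := by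
        rw [smul_smul, ← ENNReal.ofReal_ofNat 2, ← ENNReal.ofReal_inv_of_pos two_pos,
          ← ENNReal.ofReal_mul (by norm_num)]
        ring_nf
    _ ≤ (2 : ENNReal)⁻¹ • prodLaw := smul_le_smul_left _ smul_unifHalf_le_prodLaw
    _ ≤ _ := Measure.le_add_left le_rfl
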